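/- Let a = (a_1,…,a_l) be a strictly increasing sequence of positive integers. Then rem(a) = ∅ if and only if a is a symplectic column, i.e., a_i ≥ 2i−1 for all i ∈ [l]. -/

import Mathlib

/-!
A strictly increasing column fails to be symplectic exactly when it has a first violation
`a_k < 2k - 1`, and since the prefix before it is symplectic this forces
`(a_{k-1}, a_k) = (2k - 3, 2k - 2)`: precisely the pair that `rem` keeps when the earlier part
has empty `rem`. Conversely, on a symplectic column `a_l ≥ 2l - 1` makes the keeping condition
fail at every step, so `rem` only ever drops entries.
-/

/-- The removal subword `rem a` of a column `a = (a_1, …, a_l)` (written 0-indexed as a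
list): `rem a = []` if `l ≤ 1`; if `l ≥ 2`, `a_l` is even, `a_{l-1} = a_l − 1` and
`a_l < 2l − |rem (a_1,…,a_{l-2})| − 1`, then `rem a = rem (a_1,…,a_{l-2}) ++ [a_{l-1}, a_l]`;
otherwise `rem a = rem (a_1,…,a_{l-1})`. -/
def rem (a : List ℕ) : List ℕ :=
  if a.length ≤ 1 then []
  else
    if a.getLast! % 2 = 0 ∧ a.dropLast.getLast! + 1 = a.getLast! ∧
        a.getLast! + (rem a.dropLast.dropLast).length + 1 < 2 * a.length then
      rem a.dropLast.dropLast ++ [a.dropLast.getLast!, a.getLast!]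
    else
      rem a.dropLast
termination_by a.length
decreasing_by
  all_goals (simp [List.length_dropLast]; omega)

def IsSymplecticColumn (a : List ℕ) : Prop :=
  ∀ i (h : i < a.length), 2 * i + 1 ≤ a[i]

theorem isSymplecticColumn_nil : IsSymplecticColumn [] :=
  fun _ h => absurd h (Nat.not_lt_zero _)

theorem isSymplecticColumn_append_singleton (c : List ℕ) (x : ℕ) :
    IsSymplecticColumn (c ++ [x]) ↔ IsSymplecticColumn c ∧ 2 * c.length + 1 ≤ x := by
  constructor
  · intro h
    refine ⟨fun i hi => ?_, by simpa using h c.length (by simp)⟩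
    have := h i (by simp; omega)
    rwa [List.getElem_append_left hi] at this
  · rintro ⟨hc, hx⟩ i hi
    rw [List.length_append, List.length_singleton] at hi
    rcases Nat.lt_or_ge i c.length with hi' | hi'
    · rw [List.getElem_append_left hi']
      exact hc i hi'
    · obtain rfl : i = c.length := by omega
      simpa using hx

theorem rem_of_length_le_one {a : List ℕ} (h : a.length ≤ 1) : rem a = [] := by
  rw [rem, if_pos h]

theorem rem_append_pair (b : List ℕ) (y x : ℕ) :
    rem (b ++ [y, x]) =
      if x % 2 = 0 ∧ y + 1 = x ∧ x + (rem b).length + 1 < 2 * (b.length + 2) then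
        rem b ++ [y, x]
      else rem (b ++ [y]) := by
  rw [rem, if_neg (by simp)]
  simp [List.dropLast_append_of_ne_nil]

theorem rem_eq_nil_of_isSymplecticColumn {a : List ℕ} (ha : IsSymplecticColumn a) :
    rem a = [] := by
  induction a using List.reverseRecOn with
  | nil => exact rem_of_length_le_one (by simp)
  | append_singleton c x ih =>
    rcases List.eq_nil_or_concat' c with rfl | ⟨b, y, rfl⟩
    · exact rem_of_length_le_one (by simp)
    · rw [isSymplecticColumn_append_singleton] at ha
      simp only [List.length_append, List.length_singleton] at ha
      rw [List.append_assoc, List.singleton_append, rem_append_pair, if_neg (by omega)]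
      exact ih ha.1

theorem isSymplecticColumn_of_rem_eq_nil {a : List ℕ} (hsorted : a.Pairwise (· < ·))
    (hpos : ∀ x ∈ a, 1 ≤ x) (hrem : rem a = []) : IsSymplecticColumn a := by
  induction a using List.reverseRecOn with
  | nil => exact isSymplecticColumn_nil
  | append_singleton c x ih =>
    rw [isSymplecticColumn_append_singleton]
    rcases List.eq_nil_or_concat' c with rfl | ⟨b, y, rfl⟩
    · exact ⟨isSymplecticColumn_nil, by simpa using hpos x (by simp)⟩
    have hyx : y < x := (List.pairwise_append.1 hsorted).2.2 y (by simp) x (by simp)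
    rw [List.append_assoc, List.singleton_append, rem_append_pair] at hrem
    split_ifs at hrem with hkeep
    · simp at hrem
    have hprefix := ih (List.pairwise_append.1 hsorted).1
      (fun z hz => hpos z (List.mem_append_left _ hz)) hrem
    refine ⟨hprefix, ?_⟩
    rw [isSymplecticColumn_append_singleton] at hprefix
    simp only [List.length_append, List.length_singleton]
    -- otherwise `(y, x) = (2|b| + 1, 2|b| + 2)` and, `b` being symplectic, `rem` would keep it
    by_contra hx
    have hb : (rem b).length = 0 := by rw [rem_eq_nil_of_isSymplecticColumn hprefix.1]; rfl
    exact hkeep ⟨by omega, by omega, by omega⟩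

/-- `rem a = ∅` iff `a` is a symplectic column, i.e. `a_i ≥ 2i−1` (1-indexed), which
0-indexed reads `a[i] ≥ 2i+1`. -/
theorem stmt_12 (a : List ℕ) (hsorted : a.Pairwise (· < ·)) (hpos : ∀ x ∈ a, 1 ≤ x) :
    rem a = [] ↔ ∀ i (h : i < a.length), 2 * i + 1 ≤ a.get ⟨i, h⟩ :=
  ⟨isSymplecticColumn_of_rem_eq_nil hsorted hpos, rem_eq_nil_of_isSymplecticColumn⟩
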